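/- Let (X, Σ, μ) be a measure space, let p ≥ 2 be a real number, and let f, g : X → ℝ be measurable functions with ∫_X |f|^p dμ < ∞ and ∫_X |g|^p dμ < ∞. Then ∫_X (|f|^{p−2}·f − |g|^{p−2}·g)·(f − g) dμ ≥ (4(p−1)/p^2)·∫_X (|f|^{p/2} − |g|^{p/2})^2 dμ. In particular, if ζ ∈ ℝ satisfies ζ^2 ≤ 4(p−1)/p^2, then ζ^2·∫_X (|f|^{p/2} − |g|^{p/2})^2 dμ ≤ ∫_X (|f|^{p−2}·f − |g|^{p−2}·g)·(f − g) dμ. -/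

import Mathlib

/-!
Pointwise inequality, then integration. For `0 ≤ b ≤ a` one has
`a ^ (p/2) - b ^ (p/2) = (p/2) ∫_b^a t ^ (p/2 - 1) dt` and `a ^ (p-1) - b ^ (p-1) = (p-1) ∫_b^a t ^ (p-2) dt`,
so Cauchy–Schwarz on `[b, a]` yields the constant `4(p-1)/p²`. When `a` and `b` have opposite signs the
pairing `(|a|^(p-2) a - |b|^(p-2) b)(a - b)` is at least `|a|^p + |b|^p ≥ (|a|^(p/2) - |b|^(p/2))²`,
and `4(p-1)/p² ≤ 1`. Both integrands are dominated by `|f|^p + |g|^p`, hence integrable, and the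
`ζ` version follows because the right-hand integral is nonnegative.
-/

open MeasureTheory Real Set

theorem sq_intervalIntegral_le_mul_integral_sq {f : ℝ → ℝ} (hf : Continuous f) {a b : ℝ}
    (hab : a ≤ b) : (∫ t in a..b, f t) ^ 2 ≤ (b - a) * ∫ t in a..b, f t ^ 2 := by
  set I := ∫ t in a..b, f t
  have hexpand : ∫ t in a..b, ((b - a) * f t - I) ^ 2 =
      (b - a) * ((b - a) * (∫ t in a..b, f t ^ 2) - I ^ 2) := by
    have h1 : IntervalIntegrable (fun t => (b - a) ^ 2 * f t ^ 2) volume a b :=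
      ((hf.pow 2).const_mul _).intervalIntegrable a b
    have h2 : IntervalIntegrable (fun t => 2 * ((b - a) * f t) * I) volume a b :=
      (((hf.const_mul _).const_mul 2).mul continuous_const).intervalIntegrable a b
    have hsq : (fun t => ((b - a) * f t - I) ^ 2) =
        fun t => (b - a) ^ 2 * f t ^ 2 - 2 * ((b - a) * f t) * I + I ^ 2 := by
      funext t; ring
    rw [hsq, intervalIntegral.integral_add (h1.sub h2) intervalIntegrable_const,
      intervalIntegral.integral_sub h1 h2, intervalIntegral.integral_const_mul,
      intervalIntegral.integral_mul_const, intervalIntegral.integral_const_mul,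
      intervalIntegral.integral_const_mul, intervalIntegral.integral_const, smul_eq_mul]
    ring
  have hnonneg : 0 ≤ (b - a) * ((b - a) * (∫ t in a..b, f t ^ 2) - I ^ 2) :=
    hexpand ▸ intervalIntegral.integral_nonneg hab fun t _ => sq_nonneg _
  rcases hab.eq_or_lt with rfl | hlt
  · simp [I]
  · linarith [(mul_nonneg_iff_of_pos_left (sub_pos.2 hlt)).1 hnonneg]

namespace Real

theorem rpow_sub_one_mul_self {x p : ℝ} (hx : 0 ≤ x) (hp : p ≠ 0) : x ^ (p - 1) * x = x ^ p := by
  rw [← rpow_add_one' hx (by simpa using hp), sub_add_cancel]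

theorem rpow_half_sq {x : ℝ} (hx : 0 ≤ x) (p : ℝ) : (x ^ (p / 2)) ^ 2 = x ^ p := by
  rw [← rpow_mul_natCast hx]; norm_num

theorem rpow_half_sub_sq_le_of_le {p : ℝ} (hp : 2 ≤ p) {a b : ℝ} (hb : 0 ≤ b) (hba : b ≤ a) :
    4 * (p - 1) / p ^ 2 * (a ^ (p / 2) - b ^ (p / 2)) ^ 2 ≤ (a ^ (p - 1) - b ^ (p - 1)) * (a - b) := by
  have hI : ∫ t in b..a, t ^ (p / 2 - 1) = (a ^ (p / 2) - b ^ (p / 2)) / (p / 2) := by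
    rw [integral_rpow (Or.inl (by linarith)), sub_add_cancel]
  have hJ : ∫ t in b..a, (t ^ (p / 2 - 1)) ^ 2 = (a ^ (p - 1) - b ^ (p - 1)) / (p - 1) := by
    have hsq : EqOn (fun t => (t ^ (p / 2 - 1)) ^ 2) (fun t => t ^ (p - 2)) (uIcc b a) := by
      intro t ht
      rw [uIcc_of_le hba] at ht
      simp only [← rpow_mul_natCast (hb.trans ht.1)]
      ring_nf
    rw [intervalIntegral.integral_congr hsq, integral_rpow (Or.inl (by linarith))]
    ring_nf
  have hcs := sq_intervalIntegral_le_mul_integral_sq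
    (continuous_rpow_const (by linarith : 0 ≤ p / 2 - 1)) hba
  rw [hI, hJ] at hcs
  have hp1 : 0 < p - 1 := by linarith
  calc 4 * (p - 1) / p ^ 2 * (a ^ (p / 2) - b ^ (p / 2)) ^ 2
      = (p - 1) * ((a ^ (p / 2) - b ^ (p / 2)) / (p / 2)) ^ 2 := by
        field_simp; ring
    _ ≤ (p - 1) * ((a - b) * ((a ^ (p - 1) - b ^ (p - 1)) / (p - 1))) := by gcongr
    _ = (a ^ (p - 1) - b ^ (p - 1)) * (a - b) := by field_simp

theorem rpow_half_sub_sq_le {p : ℝ} (hp : 2 ≤ p) {a b : ℝ} (ha : 0 ≤ a) (hb : 0 ≤ b) :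
    4 * (p - 1) / p ^ 2 * (a ^ (p / 2) - b ^ (p / 2)) ^ 2 ≤ (a ^ (p - 1) - b ^ (p - 1)) * (a - b) := by
  rcases le_total b a with hba | hab
  · exact rpow_half_sub_sq_le_of_le hp hb hba
  · linear_combination rpow_half_sub_sq_le_of_le hp ha hab

theorem rpow_half_sub_sq_le_rpow_add_rpow {u v : ℝ} (hu : 0 ≤ u) (hv : 0 ≤ v) (p : ℝ) :
    (u ^ (p / 2) - v ^ (p / 2)) ^ 2 ≤ u ^ p + v ^ p := by
  nlinarith [rpow_half_sq hu p, rpow_half_sq hv p, rpow_nonneg hu (p / 2), rpow_nonneg hv (p / 2)]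

theorem rpow_add_rpow_le_rpow_sub_one_add_mul_add {p u v : ℝ} (hp : p ≠ 0) (hu : 0 ≤ u)
    (hv : 0 ≤ v) : u ^ p + v ^ p ≤ (u ^ (p - 1) + v ^ (p - 1)) * (u + v) := by
  nlinarith [rpow_sub_one_mul_self hu hp, rpow_sub_one_mul_self hv hp,
    mul_nonneg (rpow_nonneg hu (p - 1)) hv, mul_nonneg (rpow_nonneg hv (p - 1)) hu]

theorem rpow_sub_one_add_mul_add_le {p u v : ℝ} (hp : 1 ≤ p) (hu : 0 ≤ u) (hv : 0 ≤ v) :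
    (u ^ (p - 1) + v ^ (p - 1)) * (u + v) ≤ 2 * (u ^ p + v ^ p) := by
  have hmono : 0 ≤ (u ^ (p - 1) - v ^ (p - 1)) * (u - v) := by
    rcases le_total v u with hvu | huv
    · exact mul_nonneg (sub_nonneg.2 (rpow_le_rpow hv hvu (by linarith))) (sub_nonneg.2 hvu)
    · exact mul_nonneg_of_nonpos_of_nonpos
        (sub_nonpos.2 (rpow_le_rpow hu huv (by linarith))) (sub_nonpos.2 huv)
  have hp0 : p ≠ 0 := by positivity
  nlinarith [rpow_sub_one_mul_self hu hp0, rpow_sub_one_mul_self hv hp0]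

theorem abs_rpow_mul_self_of_nonneg {x : ℝ} (hx : 0 ≤ x) {p : ℝ} (hp : p ≠ 1) :
    |x| ^ (p - 2) * x = x ^ (p - 1) := by
  rw [abs_of_nonneg hx, ← rpow_add_one' hx (by contrapose! hp; linarith)]
  ring_nf

theorem abs_rpow_mul_self_of_nonpos {x : ℝ} (hx : x ≤ 0) {p : ℝ} (hp : p ≠ 1) :
    |x| ^ (p - 2) * x = -(-x) ^ (p - 1) := by
  rw [← abs_neg, ← abs_rpow_mul_self_of_nonneg (neg_nonneg.2 hx) hp]
  ring

theorem abs_rpow_half_sub_sq_le_pairing_of_nonneg {p : ℝ} (hp : 2 ≤ p) {a : ℝ} (ha : 0 ≤ a)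
    (b : ℝ) : 4 * (p - 1) / p ^ 2 * (|a| ^ (p / 2) - |b| ^ (p / 2)) ^ 2 ≤
      (|a| ^ (p - 2) * a - |b| ^ (p - 2) * b) * (a - b) := by
  have hp1 : p ≠ 1 := by linarith
  rw [abs_rpow_mul_self_of_nonneg ha hp1, abs_of_nonneg ha]
  rcases le_total 0 b with hb | hb
  · rw [abs_rpow_mul_self_of_nonneg hb hp1, abs_of_nonneg hb]
    exact rpow_half_sub_sq_le hp ha hb
  · rw [abs_rpow_mul_self_of_nonpos hb hp1, abs_of_nonpos hb]
    have hc : 4 * (p - 1) / p ^ 2 ≤ 1 := by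
      rw [div_le_one (by positivity)]; nlinarith
    have hc0 : 0 ≤ 4 * (p - 1) / p ^ 2 := by apply div_nonneg <;> nlinarith
    have := rpow_half_sub_sq_le_rpow_add_rpow ha (neg_nonneg.2 hb) p
    have := rpow_add_rpow_le_rpow_sub_one_add_mul_add (by positivity) ha (neg_nonneg.2 hb)
    nlinarith

theorem abs_rpow_half_sub_sq_le_pairing {p : ℝ} (hp : 2 ≤ p) (a b : ℝ) :
    4 * (p - 1) / p ^ 2 * (|a| ^ (p / 2) - |b| ^ (p / 2)) ^ 2 ≤
      (|a| ^ (p - 2) * a - |b| ^ (p - 2) * b) * (a - b) := by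
  rcases le_total 0 a with ha | ha
  · exact abs_rpow_half_sub_sq_le_pairing_of_nonneg hp ha b
  · -- both sides are invariant under `(a, b) ↦ (-a, -b)`
    have := abs_rpow_half_sub_sq_le_pairing_of_nonneg hp (neg_nonneg.2 ha) (-b)
    simp only [abs_neg] at this
    linear_combination this

theorem abs_pairing_le {p : ℝ} (hp : 1 < p) (a b : ℝ) :
    |(|a| ^ (p - 2) * a - |b| ^ (p - 2) * b) * (a - b)| ≤ 2 * (|a| ^ p + |b| ^ p) := by
  have habs : ∀ x : ℝ, |(|x| ^ (p - 2) * x)| = |x| ^ (p - 1) := fun x => by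
    rw [abs_mul, abs_of_nonneg (rpow_nonneg (abs_nonneg x) _)]
    simpa using abs_rpow_mul_self_of_nonneg (abs_nonneg x) (p := p) (by linarith)
  calc |(|a| ^ (p - 2) * a - |b| ^ (p - 2) * b) * (a - b)|
      ≤ (|a| ^ (p - 1) + |b| ^ (p - 1)) * (|a| + |b|) := by
        rw [abs_mul, ← habs a, ← habs b]
        gcongr <;> exact abs_sub _ _
    _ ≤ 2 * (|a| ^ p + |b| ^ p) := rpow_sub_one_add_mul_add_le hp.le (abs_nonneg a) (abs_nonneg b)

end Real

section Integrability

variable {X : Type*} [MeasurableSpace X] {μ : Measure X} {p : ℝ} {f g : X → ℝ}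

theorem integrable_sq_abs_rpow_half_sub (hf : Measurable f) (hg : Measurable g)
    (hfp : Integrable (fun x => |f x| ^ p) μ) (hgp : Integrable (fun x => |g x| ^ p) μ) :
    Integrable (fun x => (|f x| ^ (p / 2) - |g x| ^ (p / 2)) ^ 2) μ :=
  (hfp.add hgp).mono' (by fun_prop) <| ae_of_all _ fun x => by
    rw [norm_of_nonneg (sq_nonneg _)]
    exact rpow_half_sub_sq_le_rpow_add_rpow (abs_nonneg _) (abs_nonneg _) p

theorem integrable_pairing (hp : 1 < p) (hf : Measurable f) (hg : Measurable g)
    (hfp : Integrable (fun x => |f x| ^ p) μ) (hgp : Integrable (fun x => |g x| ^ p) μ) :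
    Integrable (fun x => (|f x| ^ (p - 2) * f x - |g x| ^ (p - 2) * g x) * (f x - g x)) μ :=
  ((hfp.add hgp).const_mul 2).mono' (by fun_prop) <| ae_of_all _ fun x =>
    (norm_eq_abs _).trans_le (abs_pairing_le hp (f x) (g x))

theorem integrable_abs_rpow_of_lintegral_lt_top (hf : Measurable f)
    (h : ∫⁻ x, ENNReal.ofReal (|f x| ^ p) ∂μ < ⊤) : Integrable (fun x => |f x| ^ p) μ :=
  (lintegral_ofReal_ne_top_iff_integrable (by fun_prop : Measurable _).aestronglyMeasurable
    (ae_of_all _ fun x => rpow_nonneg (abs_nonneg _) p)).1 h.ne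

end Integrability

/-- For `p ≥ 2` and `f, g` measurable with `∫|f|^p, ∫|g|^p < ∞`:
`∫(|f|^{p−2}f − |g|^{p−2}g)(f − g) dμ ≥ (4(p−1)/p²) ∫(|f|^{p/2} − |g|^{p/2})² dμ`,
and consequently, if `ζ² ≤ 4(p−1)/p²`, then
`ζ² ∫(|f|^{p/2} − |g|^{p/2})² dμ ≤ ∫(|f|^{p−2}f − |g|^{p−2}g)(f − g) dμ`. -/
theorem integral_p_laplace_monotonicity
    {X : Type*} [MeasurableSpace X] (μ : Measure X) (p : ℝ) (hp : 2 ≤ p)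
    (f g : X → ℝ) (hf : Measurable f) (hg : Measurable g)
    (hfp : ∫⁻ x, ENNReal.ofReal (|f x| ^ p) ∂μ < ⊤)
    (hgp : ∫⁻ x, ENNReal.ofReal (|g x| ^ p) ∂μ < ⊤) :
    (∫ x, (|f x| ^ (p - 2) * f x - |g x| ^ (p - 2) * g x) * (f x - g x) ∂μ ≥
        4 * (p - 1) / p ^ 2 * ∫ x, (|f x| ^ (p / 2) - |g x| ^ (p / 2)) ^ 2 ∂μ) ∧
      ∀ ζ : ℝ, ζ ^ 2 ≤ 4 * (p - 1) / p ^ 2 →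
        ζ ^ 2 * ∫ x, (|f x| ^ (p / 2) - |g x| ^ (p / 2)) ^ 2 ∂μ ≤
          ∫ x, (|f x| ^ (p - 2) * f x - |g x| ^ (p - 2) * g x) * (f x - g x) ∂μ := by
  have hfp' := integrable_abs_rpow_of_lintegral_lt_top hf hfp
  have hgp' := integrable_abs_rpow_of_lintegral_lt_top hg hgp
  have hmain : 4 * (p - 1) / p ^ 2 * ∫ x, (|f x| ^ (p / 2) - |g x| ^ (p / 2)) ^ 2 ∂μ ≤
      ∫ x, (|f x| ^ (p - 2) * f x - |g x| ^ (p - 2) * g x) * (f x - g x) ∂μ := by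
    rw [← integral_const_mul]
    exact integral_mono ((integrable_sq_abs_rpow_half_sub hf hg hfp' hgp').const_mul _)
      (integrable_pairing (by linarith) hf hg hfp' hgp')
      fun x => abs_rpow_half_sub_sq_le_pairing hp (f x) (g x)
  exact ⟨hmain, fun ζ hζ =>
    (mul_le_mul_of_nonneg_right hζ (integral_nonneg fun x => sq_nonneg _)).trans hmain⟩
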